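/- Let X̃, S̃ be symmetric positive definite n×n matrices with ν = (X̃ • S̃)/n and ‖X̃^{1/2} S̃ X̃^{1/2} − νI‖_F ≤ γν, γ ∈ (0,1). For any θ ∈ ℝ, define Φ_θ(X̃,S̃) = ‖X̃^{1/2} S̃^{1/2} − θν X̃^{-1/2} S̃^{-1/2}‖_F (using any factorization with these expressions well-defined). Then Φ_θ(X̃,S̃)² ≤ ((γ² + (1−θ)² n)/(1−γ)) · ν. -/

import Mathlib

open Matrix

/-- The Frobenius norm of a matrix. -/
noncomputable def frobNorm {n m : ℕ} (A : Matrix (Fin n) (Fin m) ℝ) : ℝ :=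
  Real.sqrt (∑ i, ∑ j, (A i j) ^ 2)

open scoped ComplexOrder in
/-- The square root of a positive semidefinite matrix, as defined in the older Mathlib
(`Matrix.PosSemidef.sqrt`, since removed). -/
noncomputable def Matrix.PosSemidef.sqrt {n 𝕜 : Type*} [Fintype n] [RCLike 𝕜] [DecidableEq n]
    {A : Matrix n n 𝕜} (hA : A.PosSemidef) : Matrix n n 𝕜 :=
  hA.1.eigenvectorUnitary.1 * diagonal ((↑) ∘ Real.sqrt ∘ hA.1.eigenvalues) *
  (star hA.1.eigenvectorUnitary : Matrix n n 𝕜)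

lemma Matrix.PosSemidef.sqrt_mul_self {n : Type*} [Fintype n] [DecidableEq n]
    {A : Matrix n n ℝ} (hA : A.PosSemidef) : hA.sqrt * hA.sqrt = A := by
  have hU : (star hA.1.eigenvectorUnitary : Matrix n n ℝ) * hA.1.eigenvectorUnitary.1 = 1 :=
    Unitary.coe_star_mul_self _
  have hd : diagonal ((RCLike.ofReal : ℝ → ℝ) ∘ Real.sqrt ∘ hA.1.eigenvalues) *
      diagonal ((RCLike.ofReal : ℝ → ℝ) ∘ Real.sqrt ∘ hA.1.eigenvalues)
      = diagonal (RCLike.ofReal ∘ hA.1.eigenvalues : n → ℝ) := by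
    rw [diagonal_mul_diagonal]
    congr 1
    funext i
    simp [Real.mul_self_sqrt (hA.eigenvalues_nonneg i)]
  conv_rhs => rw [hA.1.spectral_theorem, Unitary.conjStarAlgAut_apply]
  unfold Matrix.PosSemidef.sqrt
  calc _ = hA.1.eigenvectorUnitary.1 * diagonal ((RCLike.ofReal : ℝ → ℝ) ∘ Real.sqrt ∘ hA.1.eigenvalues) *
      ((star hA.1.eigenvectorUnitary : Matrix n n ℝ) * hA.1.eigenvectorUnitary.1) *
      diagonal ((RCLike.ofReal : ℝ → ℝ) ∘ Real.sqrt ∘ hA.1.eigenvalues) *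
      (star hA.1.eigenvectorUnitary : Matrix n n ℝ) := by simp only [mul_assoc]
    _ = _ := by rw [hU, mul_one, mul_assoc _ (diagonal _) (diagonal _), hd]

lemma Matrix.PosSemidef.posSemidef_sqrt {n : Type*} [Fintype n] [DecidableEq n]
    {A : Matrix n n ℝ} (hA : A.PosSemidef) : hA.sqrt.PosSemidef := by
  unfold Matrix.PosSemidef.sqrt
  have hD : (diagonal ((↑) ∘ Real.sqrt ∘ hA.1.eigenvalues) : Matrix n n ℝ).PosSemidef := by
    rw [posSemidef_diagonal_iff]
    intro i
    simp [Real.sqrt_nonneg]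
  have := hD.mul_mul_conjTranspose_same (hA.1.eigenvectorUnitary.1)
  rwa [← Matrix.star_eq_conjTranspose] at this

lemma frobNorm_nonneg {n m : ℕ} (A : Matrix (Fin n) (Fin m) ℝ) : 0 ≤ frobNorm A :=
  Real.sqrt_nonneg _

lemma frobNorm_sq {n : ℕ} (A : Matrix (Fin n) (Fin n) ℝ) :
    frobNorm A ^ 2 = (A * Aᵀ).trace := by
  rw [frobNorm, Real.sq_sqrt (by positivity)]
  simp [Matrix.trace, Matrix.mul_apply, Matrix.diag, pow_two]

/-- Under the centrality condition `‖X̃^{1/2} S̃ X̃^{1/2} − νI‖_F ≤ γν`, the quantity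
`Φ_θ(X̃,S̃) = ‖X̃^{1/2} S̃^{1/2} − θν X̃^{-1/2} S̃^{-1/2}‖_F` satisfies
`Φ_θ² ≤ ((γ² + (1−θ)² n)/(1−γ)) ν`. -/
theorem Phi_theta_sq_bound {n : ℕ}
    (X S : Matrix (Fin n) (Fin n) ℝ) (hX : X.PosDef) (hS : S.PosDef)
    (γ ν θ : ℝ) (hγ : γ ∈ Set.Ioo (0 : ℝ) 1)
    (hν : ν = (X * S).trace / n) (hνpos : 0 < ν)
    (hd : frobNorm (hX.posSemidef.sqrt * S * hX.posSemidef.sqrt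
        - ν • (1 : Matrix (Fin n) (Fin n) ℝ)) ≤ γ * ν) :
    (frobNorm (hX.posSemidef.sqrt * hS.posSemidef.sqrt
        - (θ * ν) • ((hX.posSemidef.sqrt)⁻¹ * (hS.posSemidef.sqrt)⁻¹))) ^ 2
      ≤ ((γ ^ 2 + (1 - θ) ^ 2 * n) / (1 - γ)) * ν := by
  obtain ⟨hγ0, hγ1⟩ := hγ
  set P := hX.posSemidef.sqrt with hPdef
  set Q := hS.posSemidef.sqrt with hQdef
  have hPP : P * P = X := hX.posSemidef.sqrt_mul_self
  have hQQ : Q * Q = S := hS.posSemidef.sqrt_mul_self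
  have hPt : Pᵀ = P := by
    have := hX.posSemidef.posSemidef_sqrt.1
    rwa [Matrix.IsHermitian, conjTranspose_eq_transpose_of_trivial] at this
  have hQt : Qᵀ = Q := by
    have := hS.posSemidef.posSemidef_sqrt.1
    rwa [Matrix.IsHermitian, conjTranspose_eq_transpose_of_trivial] at this
  -- invertibility of P and Q
  have hPdet : IsUnit P.det := by
    have h : P.det * P.det = X.det := by rw [← det_mul, hPP]
    refine isUnit_iff_ne_zero.mpr fun h0 => ?_
    rw [h0, mul_zero] at h
    exact absurd (h ▸ hX.det_pos) (lt_irrefl (0:ℝ))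
  have hQdet : IsUnit Q.det := by
    have h : Q.det * Q.det = S.det := by rw [← det_mul, hQQ]
    refine isUnit_iff_ne_zero.mpr fun h0 => ?_
    rw [h0, mul_zero] at h
    exact absurd (h ▸ hS.det_pos) (lt_irrefl (0:ℝ))
  have hPinv : P * P⁻¹ = 1 := mul_nonsing_inv P hPdet
  have hPinv' : P⁻¹ * P = 1 := nonsing_inv_mul P hPdet
  have hQinv : Q * Q⁻¹ = 1 := mul_nonsing_inv Q hQdet
  have hQinv' : Q⁻¹ * Q = 1 := nonsing_inv_mul Q hQdet
  -- the central matrix M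
  set M := P * S * P with hMdef
  have hMsemi : M.PosSemidef := by
    have := hS.posSemidef.mul_mul_conjTranspose_same P
    rwa [conjTranspose_eq_transpose_of_trivial, hPt] at this
  have hMh : M.IsHermitian := hMsemi.1
  set U : Matrix (Fin n) (Fin n) ℝ := (hMh.eigenvectorUnitary : Matrix (Fin n) (Fin n) ℝ) with hUdef
  set lam : Fin n → ℝ := hMh.eigenvalues with hlamdef
  have hU1 : star U * U = 1 := Unitary.coe_star_mul_self hMh.eigenvectorUnitary
  have hU2 : U * star U = 1 := Unitary.coe_mul_star_self hMh.eigenvectorUnitary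
  -- conjugation machinery
  have key : ∀ d e : Fin n → ℝ, (U * diagonal d * star U) * (U * diagonal e * star U)
      = U * diagonal (fun i => d i * e i) * star U := by
    intro d e
    have : diagonal d * ((star U * U) * (diagonal e * star U))
        = diagonal (fun i => d i * e i) * star U := by
      rw [hU1, one_mul, ← mul_assoc, diagonal_mul_diagonal]
    calc (U * diagonal d * star U) * (U * diagonal e * star U)
        = U * (diagonal d * ((star U * U) * (diagonal e * star U))) := by
          simp only [mul_assoc]
      _ = U * (diagonal (fun i => d i * e i) * star U) := by rw [this]
      _ = U * diagonal (fun i => d i * e i) * star U := by rw [mul_assoc]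
  have keytr : ∀ d : Fin n → ℝ, (U * diagonal d * star U).trace = ∑ i, d i := by
    intro d
    rw [trace_mul_cycle, hU1, one_mul, trace_diagonal]
  have keyT : ∀ d : Fin n → ℝ, (U * diagonal d * star U)ᵀ = U * diagonal d * star U := by
    intro d
    have hsU : (star U : Matrix (Fin n) (Fin n) ℝ) = Uᵀ := by
      rw [Matrix.star_eq_conjTranspose, conjTranspose_eq_transpose_of_trivial]
    rw [transpose_mul, transpose_mul, hsU, transpose_transpose, diagonal_transpose,
      ← mul_assoc]
  have hMspec : M = U * diagonal lam * star U := by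
    have h := hMh.spectral_theorem
    have h2 : RCLike.ofReal ∘ hMh.eigenvalues = lam := by
      funext i
      simp [Function.comp, hlamdef]
    rw [Unitary.conjStarAlgAut_apply, h2] at h
    exact h
  have hone : (1 : Matrix (Fin n) (Fin n) ℝ) = U * diagonal (fun _ => 1) * star U := by
    rw [diagonal_one, mul_one, hU2]
  have hsmul : ∀ (c : ℝ) (d : Fin n → ℝ), c • (U * diagonal d * star U)
      = U * diagonal (fun i => c * d i) * star U := by
    intro c d
    have h : diagonal (fun i => c * d i) = c • diagonal d := diagonal_smul c d
    rw [h]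
    simp only [mul_smul_comm, smul_mul_assoc]
  -- trace of M and eigenvalue sum
  have hn : (n : ℝ) ≠ 0 := by
    intro h0
    rw [h0, div_zero] at hν
    exact absurd (hν ▸ hνpos) (lt_irrefl 0)
  have htrM : M.trace = n * ν := by
    rw [hMdef, trace_mul_cycle, hPP, hν]
    field_simp
  have hsum : ∑ i, lam i = n * ν := by
    rw [← keytr lam, ← hMspec, htrM]
  -- Frobenius bound gives eigenvalue lower bound
  have hdsq : ∑ i, (lam i - ν) ^ 2 ≤ (γ * ν) ^ 2 := by
    have hMnu : M - ν • (1 : Matrix (Fin n) (Fin n) ℝ)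
        = U * diagonal (fun i => lam i - ν) * star U := by
      have h1 : ν • (1 : Matrix (Fin n) (Fin n) ℝ)
          = U * diagonal (fun _ => ν * 1) * star U := by rw [hone, hsmul]
      have hdg : diagonal lam - diagonal (fun _ : Fin n => ν * 1)
          = diagonal (fun i => lam i - ν) := by
        rw [diagonal_sub]
        congr 1
        funext i
        simp
      rw [hMspec, h1, ← Matrix.sub_mul, ← Matrix.mul_sub, hdg]
    have h1 : frobNorm (M - ν • (1 : Matrix (Fin n) (Fin n) ℝ)) ^ 2
        = ∑ i, (lam i - ν) ^ 2 := by
      rw [frobNorm_sq, hMnu, keyT, key, keytr]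
      congr 1
      funext i
      ring
    calc ∑ i, (lam i - ν) ^ 2 = frobNorm (M - ν • (1 : Matrix (Fin n) (Fin n) ℝ)) ^ 2 := h1.symm
      _ ≤ (γ * ν) ^ 2 := by
          apply sq_le_sq'
          · linarith [frobNorm_nonneg (M - ν • (1 : Matrix (Fin n) (Fin n) ℝ)),
              mul_pos hγ0 hνpos]
          · exact hd
  have hlam_lb : ∀ i, (1 - γ) * ν ≤ lam i := by
    intro i
    have h1 : (lam i - ν) ^ 2 ≤ (γ * ν) ^ 2 := by
      refine le_trans ?_ hdsq
      exact Finset.single_le_sum (f := fun j => (lam j - ν) ^ 2)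
        (fun j _ => sq_nonneg _) (Finset.mem_univ i)
    nlinarith [mul_pos hγ0 hνpos, sq_nonneg (lam i - ν + γ * ν)]
  have h1γν : 0 < (1 - γ) * ν := mul_pos (by linarith) hνpos
  have hlam_pos : ∀ i, 0 < lam i := fun i => lt_of_lt_of_le h1γν (hlam_lb i)
  -- inverse of M
  have hMinv : M⁻¹ = U * diagonal (fun i => (lam i)⁻¹) * star U := by
    apply inv_eq_right_inv
    rw [hMspec, key, hone]
    have h : (fun i => lam i * (lam i)⁻¹) = fun _ : Fin n => (1 : ℝ) := by
      funext i
      exact mul_inv_cancel₀ (hlam_pos i).ne'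
    rw [h]
  have htrMinv : M⁻¹.trace = ∑ i, (lam i)⁻¹ := by rw [hMinv, keytr]
  -- also M⁻¹ = P⁻¹ * S⁻¹ * P⁻¹
  have hMinv2 : M⁻¹ = P⁻¹ * S⁻¹ * P⁻¹ := by
    rw [hMdef, Matrix.mul_inv_rev, Matrix.mul_inv_rev]
    rw [mul_assoc]
  have hSinv : S⁻¹ = Q⁻¹ * Q⁻¹ := by rw [← hQQ, Matrix.mul_inv_rev]
  -- the matrix A - B
  set A := P * Q with hAdef
  set B := (θ * ν) • (P⁻¹ * Q⁻¹) with hBdef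
  have hAt : Aᵀ = Q * P := by rw [hAdef, transpose_mul, hPt, hQt]
  have hBt : Bᵀ = (θ * ν) • (Q⁻¹ * P⁻¹) := by
    rw [hBdef, transpose_smul, transpose_mul, transpose_nonsing_inv, transpose_nonsing_inv,
      hPt, hQt]
  have hAAt : (A * Aᵀ).trace = n * ν := by
    rw [hAt, hAdef]
    have : P * Q * (Q * P) = M := by
      rw [hMdef, ← hQQ]
      simp only [mul_assoc]
    rw [this, htrM]
  have hABt : (A * Bᵀ).trace = θ * ν * n := by
    rw [hBt, hAdef, Matrix.mul_smul, trace_smul]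
    have : P * Q * (Q⁻¹ * P⁻¹) = 1 := by
      calc P * Q * (Q⁻¹ * P⁻¹) = P * (Q * Q⁻¹) * P⁻¹ := by simp only [mul_assoc]
        _ = 1 := by rw [hQinv, mul_one, hPinv]
    rw [this, trace_one]
    simp [mul_comm]
  have hBAt : (B * Aᵀ).trace = θ * ν * n := by
    rw [hAt, hBdef, Matrix.smul_mul, trace_smul]
    have : P⁻¹ * Q⁻¹ * (Q * P) = 1 := by
      calc P⁻¹ * Q⁻¹ * (Q * P) = P⁻¹ * (Q⁻¹ * Q) * P := by simp only [mul_assoc]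
        _ = 1 := by rw [hQinv', mul_one, hPinv']
    rw [this, trace_one]
    simp [mul_comm]
  have hBBt : (B * Bᵀ).trace = (θ * ν) ^ 2 * ∑ i, (lam i)⁻¹ := by
    rw [hBt, hBdef, Matrix.smul_mul, Matrix.mul_smul, trace_smul, trace_smul]
    have : P⁻¹ * Q⁻¹ * (Q⁻¹ * P⁻¹) = M⁻¹ := by
      rw [hMinv2, hSinv]
      simp only [mul_assoc]
    rw [this, htrMinv, smul_eq_mul, smul_eq_mul]
    ring
  -- the main identity
  have hPhi : frobNorm (A - B) ^ 2 = ∑ i, (lam i - θ * ν) ^ 2 / lam i := by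
    rw [frobNorm_sq, transpose_sub, Matrix.sub_mul, Matrix.mul_sub, Matrix.mul_sub,
      trace_sub, trace_sub, trace_sub, hAAt, hABt, hBAt, hBBt]
    have expand : ∀ i, (lam i - θ * ν) ^ 2 / lam i
        = lam i - 2 * (θ * ν) + (θ * ν) ^ 2 * (lam i)⁻¹ := by
      intro i
      field_simp [(hlam_pos i).ne']
      ring
    rw [Finset.sum_congr rfl (fun i _ => expand i)]
    rw [Finset.sum_add_distrib, Finset.sum_sub_distrib, hsum, Finset.sum_const,
      ← Finset.mul_sum]
    simp only [Finset.card_univ, Fintype.card_fin, nsmul_eq_mul]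
    ring
  rw [hPhi]
  -- final estimate
  have step1 : ∑ i, (lam i - θ * ν) ^ 2 / lam i
      ≤ (∑ i, (lam i - θ * ν) ^ 2) / ((1 - γ) * ν) := by
    rw [Finset.sum_div]
    apply Finset.sum_le_sum
    intro i _
    exact div_le_div_of_nonneg_left (sq_nonneg _) h1γν (hlam_lb i)
  have step2 : ∑ i, (lam i - θ * ν) ^ 2 ≤ (γ ^ 2 + (1 - θ) ^ 2 * n) * ν ^ 2 := by
    have expand : ∀ i, (lam i - θ * ν) ^ 2
        = (lam i - ν) ^ 2 + 2 * ((1 - θ) * ν) * (lam i - ν) + ((1 - θ) * ν) ^ 2 := by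
      intro i; ring
    rw [Finset.sum_congr rfl (fun i _ => expand i), Finset.sum_add_distrib,
      Finset.sum_add_distrib, ← Finset.mul_sum, Finset.sum_sub_distrib, hsum,
      Finset.sum_const, Finset.sum_const]
    simp only [Finset.card_univ, Fintype.card_fin, nsmul_eq_mul]
    nlinarith [hdsq]
  calc ∑ i, (lam i - θ * ν) ^ 2 / lam i
      ≤ (∑ i, (lam i - θ * ν) ^ 2) / ((1 - γ) * ν) := step1
    _ ≤ ((γ ^ 2 + (1 - θ) ^ 2 * n) * ν ^ 2) / ((1 - γ) * ν) := by
        exact div_le_div_of_nonneg_right step2 h1γν.le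
    _ = ((γ ^ 2 + (1 - θ) ^ 2 * n) / (1 - γ)) * ν := by
        have hγne : (1 : ℝ) - γ ≠ 0 := by linarith
        field_simp
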